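/- Let α > 0 be fixed and let λ : ℕ → ℝ_{>0} satisfy (λ(n)·n/2)^{−1/α} = o(n) as n → ∞. For each n, consider the clique infection chain on {0,…,n} with parameters λ(n), α, started at X₀ = ⌈(λ(n)n/2)^{−1/α}⌉. Then there exists a constant c > 0 such that for all sufficiently large n, the expected survival time satisfies E[T_n] ≥ 2^{cn}. -/

import Mathlib

open scoped ENNReal
open Filter Asymptotics

noncomputable def markovDist {S : Type*} [DecidableEq S] (step : S → S → ℝ≥0∞) (s0 : S) :
    ℕ → S → ℝ≥0∞
  | 0 => fun J => if J = s0 then 1 else 0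
  | t + 1 => fun J => ∑' s : S, markovDist step s0 t s * step s J

open Classical in
noncomputable def absorbStep {S : Type*} (A : Set S) (step : S → S → ℝ≥0∞) :
    S → S → ℝ≥0∞ :=
  fun s => if s ∈ A then (fun J => if J = s then 1 else 0) else step s

noncomputable def hitProb {S : Type*} [DecidableEq S] (step : S → S → ℝ≥0∞) (s0 : S)
    (A : Set S) : ℝ≥0∞ :=
  ⨆ t : ℕ, ∑' s : S, A.indicator (markovDist (absorbStep A step) s0 t) s

noncomputable def cliqueStep (n : ℕ) (lam alpha : ℝ) (I : ℕ) : ℕ → ℝ≥0∞ :=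
  if I = 0 ∨ n < I then fun J => if J = I then 1 else 0
  else fun J =>
    if J = I + 1 then
      ENNReal.ofReal (lam * (I : ℝ) ^ (1 + alpha) * ((n : ℝ) - I) /
        (lam * (I : ℝ) ^ (1 + alpha) * ((n : ℝ) - I) + I))
    else if J = I - 1 then
      ENNReal.ofReal ((I : ℝ) /
        (lam * (I : ℝ) ^ (1 + alpha) * ((n : ℝ) - I) + I))
    else 0

noncomputable def cliqueDist (n : ℕ) (lam alpha : ℝ) (x0 : ℕ) : ℕ → ℕ → ℝ≥0∞ :=
  markovDist (cliqueStep n lam alpha) x0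

noncomputable def cliqueET (n : ℕ) (lam alpha : ℝ) (x0 : ℕ) : ℝ≥0∞ :=
  ∑' t : ℕ, (1 - cliqueDist n lam alpha x0 t 0)


/-!
Below `n / 2` the chain is pushed upwards. With `x = (λn/2)^(-1/α)`, i.e. `λ x^α n = 2`, the
weights `w k = (x^k / k!)^α` satisfy `k w(k-1) ≤ b(k) w(k)` for `k < n/2`, so the normalised
tail sum `G I = ∑_{I ≤ k < n/2} w k / S` (with `S = ∑_{k < n/2} w k`) is a supermartingale up
to an error `w(n/2 - 1) / S` per step, lost at the cutoff. As `G 0 = 1` and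
`G X₀ ≤ 1 - 1/S`, this gives `P(X_t = 0) ≤ 1 - 1/(2S)` for every `t < N` once
`N w(n/2 - 1) ≤ 1/2`, hence `E T ≥ N / (2S)`. Since `x = o(n)`, Stirling's bound makes
`w(n/2 - 1) ≤ 16^-(n/2 - 1)` while `S ≤ (n/2) e^(αx)` is only `2^(o(n))`, and
`N = 4^(n/2 - 1)` gives `E T ≥ 2^(n/4)`.
-/

section Markov

variable {S : Type*} [DecidableEq S] {step : S → S → ℝ≥0∞} {s₀ : S}

theorem tsum_markovDist_zero_mul (g : S → ℝ≥0∞) :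
    ∑' s, markovDist step s₀ 0 s * g s = g s₀ := by
  rw [tsum_eq_single s₀ fun s hs => by simp [markovDist, hs]]
  simp [markovDist]

theorem tsum_markovDist_succ_mul (t : ℕ) (g : S → ℝ≥0∞) :
    ∑' s, markovDist step s₀ (t + 1) s * g s =
      ∑' s, markovDist step s₀ t s * ∑' J, step s J * g J := by
  simp only [markovDist, ← ENNReal.tsum_mul_right, ← ENNReal.tsum_mul_left, mul_assoc]
  exact ENNReal.tsum_comm

theorem tsum_markovDist_le_one (hstep : ∀ s, ∑' J, step s J ≤ 1) (t : ℕ) :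
    ∑' s, markovDist step s₀ t s ≤ 1 := by
  induction t with
  | zero => simpa using (tsum_markovDist_zero_mul (step := step) (s₀ := s₀) 1).le
  | succ t ih =>
    calc ∑' s, markovDist step s₀ (t + 1) s
        = ∑' s, markovDist step s₀ t s * ∑' J, step s J := by
          simpa using tsum_markovDist_succ_mul (step := step) (s₀ := s₀) t 1
      _ ≤ ∑' s, markovDist step s₀ t s * 1 := by gcongr with s; exact hstep s
      _ ≤ 1 := by simpa using ih

theorem tsum_markovDist_mul_le_of_drift {g : S → ℝ≥0∞} {δ : ℝ≥0∞}
    (hstep : ∀ s, ∑' J, step s J ≤ 1) (hdrift : ∀ s, ∑' J, step s J * g J ≤ g s + δ)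
    (t : ℕ) : ∑' s, markovDist step s₀ t s * g s ≤ g s₀ + t * δ := by
  induction t with
  | zero => simp [tsum_markovDist_zero_mul]
  | succ t ih =>
    calc ∑' s, markovDist step s₀ (t + 1) s * g s
        = ∑' s, markovDist step s₀ t s * ∑' J, step s J * g J := tsum_markovDist_succ_mul t g
      _ ≤ ∑' s, markovDist step s₀ t s * (g s + δ) := by gcongr with s; exact hdrift s
      _ = ∑' s, markovDist step s₀ t s * g s + (∑' s, markovDist step s₀ t s) * δ := by
          simp only [mul_add, ENNReal.tsum_add, ENNReal.tsum_mul_right]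
      _ ≤ g s₀ + t * δ + 1 * δ := by gcongr; exact tsum_markovDist_le_one hstep t
      _ = g s₀ + (t + 1 : ℕ) * δ := by push_cast; ring

theorem markovDist_le_of_drift {g : S → ℝ≥0∞} {δ : ℝ≥0∞}
    (hstep : ∀ s, ∑' J, step s J ≤ 1) (hdrift : ∀ s, ∑' J, step s J * g J ≤ g s + δ)
    {z : S} (hz : 1 ≤ g z) (t : ℕ) : markovDist step s₀ t z ≤ g s₀ + t * δ :=
  calc markovDist step s₀ t z ≤ markovDist step s₀ t z * g z := le_mul_of_one_le_right' hz
    _ ≤ ∑' s, markovDist step s₀ t s * g s := ENNReal.le_tsum z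
    _ ≤ g s₀ + t * δ := tsum_markovDist_mul_le_of_drift hstep hdrift t

end Markov

noncomputable def infectionRate (n : ℕ) (lam alpha : ℝ) (I : ℕ) : ℝ :=
  lam * (I : ℝ) ^ (1 + alpha) * ((n : ℝ) - I)

section CliqueStep

variable {n : ℕ} {lam alpha : ℝ} {I : ℕ}

theorem infectionRate_nonneg (hl : 0 ≤ lam) (hIn : I ≤ n) :
    0 ≤ infectionRate n lam alpha I := by
  have : (I : ℝ) ≤ n := by exact_mod_cast hIn
  unfold infectionRate
  have := Real.rpow_nonneg I.cast_nonneg (1 + alpha)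
  have : (0 : ℝ) ≤ n - I := by linarith
  positivity

theorem tsum_cliqueStep_mul_of_absorbing (h : I = 0 ∨ n < I) (g : ℕ → ℝ≥0∞) :
    ∑' J, cliqueStep n lam alpha I J * g J = g I := by
  rw [tsum_eq_single I fun J hJ => by simp [cliqueStep, h, hJ]]
  simp [cliqueStep, h]

theorem tsum_cliqueStep_mul (hI : I ≠ 0) (hIn : I ≤ n) (g : ℕ → ℝ≥0∞) :
    ∑' J, cliqueStep n lam alpha I J * g J =
      ENNReal.ofReal (infectionRate n lam alpha I / (infectionRate n lam alpha I + I)) * g (I + 1)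
        + ENNReal.ofReal (I / (infectionRate n lam alpha I + I)) * g (I - 1) := by
  have hne : ¬(I = 0 ∨ n < I) := by omega
  have hpair : I + 1 ≠ I - 1 := by omega
  rw [tsum_eq_sum (s := {I + 1, I - 1}) fun J hJ => ?_, Finset.sum_pair hpair]
  · simp [cliqueStep, hne, infectionRate]
  · simp only [Finset.mem_insert, Finset.mem_singleton, not_or] at hJ
    simp [cliqueStep, hne, hJ.1, hJ.2]

theorem tsum_cliqueStep (hl : 0 ≤ lam) (I : ℕ) : ∑' J, cliqueStep n lam alpha I J = 1 := by
  by_cases h : I = 0 ∨ n < I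
  · simpa using tsum_cliqueStep_mul_of_absorbing (lam := lam) (alpha := alpha) h 1
  · push Not at h
    have hb := infectionRate_nonneg (alpha := alpha) hl h.2
    have hI : (0 : ℝ) < I := by exact_mod_cast Nat.pos_of_ne_zero h.1
    have h1 := tsum_cliqueStep_mul (lam := lam) (alpha := alpha) h.1 h.2 1
    simp only [Pi.one_apply, mul_one] at h1
    rw [h1, ← ENNReal.ofReal_add (by positivity) (by positivity), ← add_div,
      div_self (by positivity), ENNReal.ofReal_one]

end CliqueStep

def tailSum (w : ℕ → ℝ) (M I : ℕ) : ℝ := ∑ k ∈ Finset.Ico I M, w k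

section TailSum

variable {w : ℕ → ℝ} {M : ℕ}

theorem tailSum_nonneg (hw : ∀ k, 0 ≤ w k) (I : ℕ) : 0 ≤ tailSum w M I :=
  Finset.sum_nonneg fun k _ => hw k

theorem tailSum_of_le {I : ℕ} (h : M ≤ I) : tailSum w M I = 0 := by
  simp [tailSum, Finset.Ico_eq_empty_of_le h]

theorem tailSum_eq_add {I : ℕ} (h : I < M) : tailSum w M I = w I + tailSum w M (I + 1) :=
  Finset.sum_eq_sum_Ico_succ_bot h w

theorem tailSum_zero : tailSum w M 0 = ∑ k ∈ Finset.range M, w k := by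
  rw [tailSum, Finset.range_eq_Ico]

theorem tailSum_antitone (hw : ∀ k, 0 ≤ w k) : Antitone (tailSum w M) := fun _ _ h =>
  Finset.sum_le_sum_of_subset_of_nonneg (Finset.Ico_subset_Ico_left h) fun k _ _ => hw k

theorem tailSum_drift (hw : ∀ k, 0 ≤ w k) {p q : ℝ} (hp : 0 ≤ p)
    (hpq : p + q = 1) {s : ℕ} (hs : s ≠ 0) (hbias : s < M → q * w (s - 1) ≤ p * w s) :
    p * tailSum w M (s + 1) + q * tailSum w M (s - 1) ≤ tailSum w M s + w (M - 1) := by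
  obtain ⟨r, rfl⟩ := Nat.exists_eq_add_one_of_ne_zero hs
  simp only [Nat.add_sub_cancel] at hbias ⊢
  rcases lt_trichotomy (r + 1) M with hlt | rfl | hgt
  · rw [tailSum_eq_add (hlt.trans' r.lt_succ_self), tailSum_eq_add hlt]
    linear_combination hbias hlt + hw (M - 1) + (tailSum w M (r + 1 + 1) + w (r + 1)) * hpq
  · rw [tailSum_eq_add r.lt_succ_self, tailSum_of_le le_rfl,
      tailSum_of_le (Nat.le_succ _), Nat.add_sub_cancel]
    nlinarith [hw r]
  · rw [tailSum_of_le hgt.le, tailSum_of_le (by omega), tailSum_of_le (by omega : M ≤ r)]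
    simpa using hw (M - 1)

end TailSum

theorem tsum_cliqueStep_mul_tailSum_le {n : ℕ} {lam alpha : ℝ} {w : ℕ → ℝ} {M : ℕ}
    (hl : 0 ≤ lam) (hw : ∀ k, 0 ≤ w k)
    (hbias : ∀ s, s ≠ 0 → s < M →
      (s : ℝ) * w (s - 1) ≤ infectionRate n lam alpha s * w s)
    (I : ℕ) :
    ∑' J, cliqueStep n lam alpha I J * ENNReal.ofReal (tailSum w M J) ≤
      ENNReal.ofReal (tailSum w M I) + ENNReal.ofReal (w (M - 1)) := by
  by_cases h : I = 0 ∨ n < I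
  · rw [tsum_cliqueStep_mul_of_absorbing h]
    exact le_self_add
  push Not at h
  set b := infectionRate n lam alpha I
  have hb : 0 ≤ b := infectionRate_nonneg hl h.2
  have hI : (0 : ℝ) < I := by exact_mod_cast Nat.pos_of_ne_zero h.1
  have hbI : 0 < b + I := by positivity
  have hdrift := tailSum_drift hw (p := b / (b + I)) (q := I / (b + I)) (by positivity)
    (by rw [← add_div, div_self hbI.ne']) h.1 fun hIM => by
      rw [div_mul_eq_mul_div, div_mul_eq_mul_div]
      exact div_le_div_of_nonneg_right (hbias I h.1 hIM) hbI.le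
  have hT := tailSum_nonneg hw (M := M)
  rw [tsum_cliqueStep_mul h.1 h.2, ← ENNReal.ofReal_mul (by positivity),
    ← ENNReal.ofReal_mul (by positivity),
    ← ENNReal.ofReal_add (by positivity [hT (I + 1)]) (by positivity [hT (I - 1)])]
  exact (ENNReal.ofReal_le_ofReal hdrift).trans ENNReal.ofReal_add_le

noncomputable def poissonWeight (alpha x : ℝ) (k : ℕ) : ℝ := (x ^ k / k.factorial) ^ alpha

section PoissonWeight

variable {alpha x : ℝ}

theorem poissonWeight_zero : poissonWeight alpha x 0 = 1 := by simp [poissonWeight]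

theorem poissonWeight_nonneg (hx : 0 ≤ x) (k : ℕ) : 0 ≤ poissonWeight alpha x k := by
  unfold poissonWeight; positivity

theorem poissonWeight_succ (hx : 0 ≤ x) (k : ℕ) :
    poissonWeight alpha x (k + 1) = poissonWeight alpha x k * (x / (k + 1)) ^ alpha := by
  rw [poissonWeight, poissonWeight, ← Real.mul_rpow (by positivity) (by positivity),
    Nat.factorial_succ, pow_succ]
  push_cast
  field_simp

theorem poissonWeight_le_exp (ha : 0 ≤ alpha) (hx : 0 ≤ x) (k : ℕ) :
    poissonWeight alpha x k ≤ Real.exp (alpha * x) := by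
  rw [mul_comm, Real.exp_mul]
  exact Real.rpow_le_rpow (by positivity) (Real.pow_div_factorial_le_exp x hx k) ha

theorem sum_poissonWeight_le (ha : 0 ≤ alpha) (hx : 0 ≤ x) (M : ℕ) :
    ∑ k ∈ Finset.range M, poissonWeight alpha x k ≤ M * Real.exp (alpha * x) := by
  simpa using Finset.sum_le_card_nsmul (Finset.range M) _ _ fun k _ =>
    poissonWeight_le_exp ha hx k

theorem poissonWeight_le_pow (ha : 0 < alpha) (hx : 0 ≤ x) {m : ℕ} (hm : m ≠ 0) {r : ℝ}
    (hr : 0 ≤ r) (h : Real.exp 1 * x ≤ m * r ^ (1 / alpha)) :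
    poissonWeight alpha x m ≤ r ^ m := by
  have hmR : (0 : ℝ) < m := by exact_mod_cast Nat.pos_of_ne_zero hm
  -- from `m ^ m / m! ≤ e ^ m`
  have hstirling : x ^ m / m.factorial ≤ (Real.exp 1 * x / m) ^ m := by
    have := Real.pow_div_factorial_le_exp _ hmR.le m
    rw [div_le_iff₀ (by positivity), ← Real.exp_one_pow] at this
    rw [div_pow, mul_pow, div_le_div_iff₀ (by positivity) (by positivity)]
    nlinarith [pow_nonneg hx m]
  have hbase : Real.exp 1 * x / m ≤ r ^ (1 / alpha) := by rw [div_le_iff₀ hmR]; linarith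
  calc poissonWeight alpha x m ≤ ((r ^ (1 / alpha)) ^ m) ^ alpha :=
        Real.rpow_le_rpow (by positivity)
          (hstirling.trans (pow_le_pow_left₀ (by positivity) hbase m)) ha.le
    _ = r ^ m := by
        rw [← Real.rpow_natCast, ← Real.rpow_mul hr, ← Real.rpow_mul hr]
        field_simp
        rw [Real.rpow_natCast]

theorem mul_poissonWeight_pred_le {n : ℕ} {lam : ℝ} (hx : 0 < x) {s : ℕ} (hs : s ≠ 0)
    (h : 1 ≤ lam * x ^ alpha * ((n : ℝ) - s)) :
    (s : ℝ) * poissonWeight alpha x (s - 1) ≤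
      infectionRate n lam alpha s * poissonWeight alpha x s := by
  obtain ⟨r, rfl⟩ := Nat.exists_eq_add_one_of_ne_zero hs
  have hr : (0 : ℝ) < r + 1 := by positivity
  have hrate : infectionRate n lam alpha (r + 1) * (x / (r + 1)) ^ alpha =
      (r + 1) * (lam * x ^ alpha * ((n : ℝ) - (r + 1))) := by
    rw [infectionRate, Real.div_rpow hx.le hr.le, Nat.cast_succ,
      Real.rpow_add hr, Real.rpow_one]
    field_simp
  rw [poissonWeight_succ hx.le, Nat.add_sub_cancel, mul_left_comm, hrate, Nat.cast_succ]
  push_cast at h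
  have hw := poissonWeight_nonneg (alpha := alpha) hx.le r
  nlinarith [mul_le_mul_of_nonneg_left h (mul_nonneg hw hr.le)]

theorem four_pow_mul_poissonWeight_le (ha : 0 < alpha) (hx : 0 ≤ x) {m : ℕ} (hm : m ≠ 0)
    (h : Real.exp 1 * x ≤ m * (1 / 16 : ℝ) ^ (1 / alpha)) :
    ((4 ^ m : ℕ) : ℝ) * poissonWeight alpha x m ≤ 1 / 2 :=
  calc ((4 ^ m : ℕ) : ℝ) * poissonWeight alpha x m ≤ 4 ^ m * (1 / 16) ^ m := by
        push_cast
        gcongr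
        exact poissonWeight_le_pow ha hx hm (by norm_num) h
    _ = (1 / 4) ^ m := by rw [← mul_pow]; norm_num
    _ ≤ (1 / 4) ^ 1 := pow_le_pow_of_le_one (by norm_num) (by norm_num) (by omega)
    _ ≤ 1 / 2 := by norm_num

end PoissonWeight

section Survival

variable {n : ℕ} {lam alpha : ℝ} {x0 : ℕ}

theorem le_cliqueET_of_forall_lt {N : ℕ} {c : ℝ≥0∞}
    (h : ∀ t < N, c ≤ 1 - cliqueDist n lam alpha x0 t 0) : N * c ≤ cliqueET n lam alpha x0 :=
  calc (N : ℝ≥0∞) * c = ∑ _t ∈ Finset.range N, c := by simp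
    _ ≤ ∑ t ∈ Finset.range N, (1 - cliqueDist n lam alpha x0 t 0) :=
        Finset.sum_le_sum fun t ht => h t (Finset.mem_range.1 ht)
    _ ≤ cliqueET n lam alpha x0 := ENNReal.sum_le_tsum _

variable {x : ℝ}

theorem one_le_sum_poissonWeight {M : ℕ} (hx : 0 ≤ x) (hM : M ≠ 0) :
    1 ≤ ∑ k ∈ Finset.range M, poissonWeight alpha x k := by
  simpa [poissonWeight_zero] using Finset.single_le_sum (fun k _ => poissonWeight_nonneg hx k)
    (Finset.mem_range.2 (Nat.pos_of_ne_zero hM))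

theorem cliqueDist_zero_le (hl : 0 ≤ lam) (hx : 0 < x) (hlx : 2 ≤ lam * x ^ alpha * n)
    (hn : 2 ≤ n) (hx0 : x0 ≠ 0) (t : ℕ) :
    let S := ∑ k ∈ Finset.range (n / 2), poissonWeight alpha x k
    cliqueDist n lam alpha x0 t 0 ≤
      ENNReal.ofReal (1 - 1 / S) +
        t * ENNReal.ofReal (poissonWeight alpha x (n / 2 - 1) / S) := by
  intro S
  have hM : n / 2 ≠ 0 := by omega
  have hS : 1 ≤ S := one_le_sum_poissonWeight hx.le hM
  set w : ℕ → ℝ := fun k => poissonWeight alpha x k / S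
  have hw k : 0 ≤ w k := by positivity [poissonWeight_nonneg (alpha := alpha) hx.le k]
  have htail0 : tailSum w (n / 2) 0 = 1 := by
    rw [tailSum_zero, ← Finset.sum_div, div_self (by positivity)]
  have hbias (s : ℕ) (hs : s ≠ 0) (hsM : s < n / 2) :
      (s : ℝ) * w (s - 1) ≤ infectionRate n lam alpha s * w s := by
    simp only [w, mul_div_assoc']
    refine div_le_div_of_nonneg_right (mul_poissonWeight_pred_le hx hs ?_) (by positivity)
    have : 2 * (s : ℝ) ≤ n := by exact_mod_cast (by omega : 2 * s ≤ n)
    nlinarith [mul_nonneg hl (Real.rpow_nonneg hx.le alpha)]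
  have hstart : tailSum w (n / 2) x0 ≤ 1 - 1 / S :=
    calc tailSum w (n / 2) x0 ≤ tailSum w (n / 2) 1 :=
          tailSum_antitone hw (Nat.one_le_iff_ne_zero.2 hx0)
      _ = 1 - 1 / S := by
          have := tailSum_eq_add (w := w) (Nat.pos_of_ne_zero hM)
          rw [htail0] at this
          simp only [w, poissonWeight_zero] at this
          linarith
  calc cliqueDist n lam alpha x0 t 0
      ≤ ENNReal.ofReal (tailSum w (n / 2) x0) + t * ENNReal.ofReal (w (n / 2 - 1)) :=
        markovDist_le_of_drift (fun s => (tsum_cliqueStep hl s).le)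
          (tsum_cliqueStep_mul_tailSum_le hl hw hbias) (by rw [htail0, ENNReal.ofReal_one]) t
    _ ≤ _ := by gcongr

theorem ofReal_div_le_cliqueET (hl : 0 ≤ lam) (hx : 0 < x) (hlx : 2 ≤ lam * x ^ alpha * n)
    (hn : 2 ≤ n) (hx0 : x0 ≠ 0) {N : ℕ}
    (hN : N * poissonWeight alpha x (n / 2 - 1) ≤ 1 / 2) :
    ENNReal.ofReal (N / (2 * ∑ k ∈ Finset.range (n / 2), poissonWeight alpha x k)) ≤
      cliqueET n lam alpha x0 := by
  set S := ∑ k ∈ Finset.range (n / 2), poissonWeight alpha x k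
  have hS : 1 ≤ S := one_le_sum_poissonWeight hx.le (by omega)
  have hw := poissonWeight_nonneg (alpha := alpha) hx.le (n / 2 - 1)
  rw [div_eq_mul_one_div, ENNReal.ofReal_mul (by positivity), ENNReal.ofReal_natCast]
  refine le_cliqueET_of_forall_lt fun t ht => ?_
  have hμ0 : 0 ≤ 1 - 1 / (2 * S) := by rw [sub_nonneg, div_le_one (by positivity)]; linarith
  have hμ : cliqueDist n lam alpha x0 t 0 ≤ ENNReal.ofReal (1 - 1 / (2 * S)) := by
    refine (cliqueDist_zero_le hl hx hlx hn hx0 t).trans ?_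
    rw [← ENNReal.ofReal_natCast, ← ENNReal.ofReal_mul (by positivity),
      ← ENNReal.ofReal_add (by rw [sub_nonneg, div_le_one (by positivity)]; exact hS)
        (by positivity)]
    apply ENNReal.ofReal_le_ofReal
    have htN : (t : ℝ) * poissonWeight alpha x (n / 2 - 1) ≤ 1 / 2 :=
      (mul_le_mul_of_nonneg_right (by exact_mod_cast ht.le) hw).trans hN
    have hhalf : (1 : ℝ) / (2 * S) = 1 / S / 2 := by ring
    have : t * (poissonWeight alpha x (n / 2 - 1) / S) ≤ 1 / S / 2 := by
      rw [mul_div_assoc', div_div, div_le_div_iff₀ (by positivity) (by positivity)]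
      nlinarith
    linarith
  calc ENNReal.ofReal (1 / (2 * S)) = 1 - ENNReal.ofReal (1 - 1 / (2 * S)) := by
        rw [← ENNReal.ofReal_one, ← ENNReal.ofReal_sub _ hμ0, sub_sub_cancel]
    _ ≤ 1 - cliqueDist n lam alpha x0 t 0 := tsub_le_tsub_left hμ 1

end Survival

theorem eventually_mul_le_two_rpow_half :
    ∀ᶠ n : ℕ in atTop, 8 * (n : ℝ) ≤ (2 : ℝ) ^ ((n : ℝ) / 2) := by
  have hsqrt : (1 : ℝ) < √2 := by rw [Real.lt_sqrt zero_le_one]; norm_num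
  filter_upwards [(isLittleO_coe_const_pow_of_one_lt (R := ℝ) hsqrt).bound
    (by norm_num : (0 : ℝ) < 1 / 8)] with n hn
  rw [Real.norm_natCast, Real.norm_of_nonneg (by positivity)] at hn
  rw [Real.sqrt_eq_rpow, ← Real.rpow_natCast, ← Real.rpow_mul zero_le_two,
    one_div_mul_eq_div 2 (n : ℝ)] at hn
  linarith

theorem two_rpow_quarter_mul_le_four_pow {n : ℕ}
    (hgrowth : 8 * (n : ℝ) ≤ 2 ^ ((n : ℝ) / 2)) :
    (2 : ℝ) ^ ((1 / 4 : ℝ) * n) * (n * 2 ^ ((1 / 4 : ℝ) * n)) ≤ 4 ^ (n / 2 - 1) := by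
  set a : ℝ := 2 ^ ((1 / 4 : ℝ) * n)
  have ha2 : a ^ 2 = 2 ^ ((n : ℝ) / 2) := by
    rw [← Real.rpow_natCast, ← Real.rpow_mul zero_le_two]
    ring_nf
  have ha4 : a ^ 4 = 2 ^ n := by
    rw [← Real.rpow_natCast, ← Real.rpow_mul zero_le_two, ← Real.rpow_natCast]
    ring_nf
  have h2n : (2 : ℝ) ^ n ≤ 8 * 4 ^ (n / 2 - 1) := by
    have : 2 ^ n ≤ 2 ^ 3 * (2 ^ 2) ^ (n / 2 - 1) := by
      rw [← pow_mul, ← pow_add]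
      exact Nat.pow_le_pow_right zero_lt_two (by omega)
    exact_mod_cast this
  nlinarith

theorem two_rpow_le_cliqueET {n : ℕ} {lam alpha x : ℝ} {x0 : ℕ} (ha : 0 < alpha)
    (hl : 0 ≤ lam) (hx : 0 < x) (hlx : 2 ≤ lam * x ^ alpha * n) (hn : 5 ≤ n) (hx0 : x0 ≠ 0)
    (hxsmall : x ≤ (1 / 16 : ℝ) ^ (1 / alpha) / (6 * Real.exp 1) * n)
    (hxlog : x ≤ Real.log 2 / (4 * alpha) * n) (hgrowth : 8 * (n : ℝ) ≤ 2 ^ ((n : ℝ) / 2)) :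
    ENNReal.ofReal (2 ^ ((1 / 4 : ℝ) * n)) ≤ cliqueET n lam alpha x0 := by
  have hN : ((4 ^ (n / 2 - 1) : ℕ) : ℝ) * poissonWeight alpha x (n / 2 - 1) ≤ 1 / 2 := by
    refine four_pow_mul_poissonWeight_le ha hx.le (by omega) ?_
    have hm : (n : ℝ) ≤ 6 * (n / 2 - 1 : ℕ) := by
      exact_mod_cast (by omega : n ≤ 6 * (n / 2 - 1))
    have hc : (0 : ℝ) ≤ (1 / 16 : ℝ) ^ (1 / alpha) := by positivity
    calc Real.exp 1 * x ≤ Real.exp 1 * ((1 / 16 : ℝ) ^ (1 / alpha) / (6 * Real.exp 1) * n) := by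
          gcongr
      _ = (1 / 16 : ℝ) ^ (1 / alpha) * n / 6 := by field_simp
      _ ≤ (n / 2 - 1 : ℕ) * (1 / 16 : ℝ) ^ (1 / alpha) := by nlinarith
  have hexp : Real.exp (alpha * x) ≤ 2 ^ ((1 / 4 : ℝ) * n) := by
    rw [Real.rpow_def_of_pos zero_lt_two, Real.exp_le_exp]
    calc alpha * x ≤ alpha * (Real.log 2 / (4 * alpha) * n) := by gcongr
      _ = Real.log 2 * (1 / 4 * n) := by field_simp
  have hS := sum_poissonWeight_le ha.le hx.le (n / 2)
  have hS1 := one_le_sum_poissonWeight (alpha := alpha) hx.le (by omega : n / 2 ≠ 0)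
  refine (ENNReal.ofReal_le_ofReal ?_).trans (ofReal_div_le_cliqueET hl hx hlx (by omega) hx0 hN)
  rw [le_div_iff₀ (by positivity), Nat.cast_pow, Nat.cast_ofNat]
  refine le_trans ?_ (two_rpow_quarter_mul_le_four_pow hgrowth)
  refine mul_le_mul_of_nonneg_left ?_ (by positivity)
  calc 2 * ∑ k ∈ Finset.range (n / 2), poissonWeight alpha x k
      ≤ 2 * ((n / 2 : ℕ) * Real.exp (alpha * x)) := by gcongr
    _ ≤ n * 2 ^ ((1 / 4 : ℝ) * n) := by
        have : 2 * ((n / 2 : ℕ) : ℝ) ≤ n := by exact_mod_cast Nat.mul_div_le n 2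
        nlinarith [Real.exp_pos (alpha * x)]

/-- For super-linear scaling with (λn/2)^{-1/α} = o(n), started at the
equilibrium ⌈(λn/2)^{-1/α}⌉, the expected survival time is at least 2^{cn}. -/
theorem clique_superlinear_survival_from_equilibrium (alpha : ℝ) (ha : 0 < alpha)
    (lam : ℕ → ℝ) (hpos : ∀ n, 0 < lam n)
    (hlittle : (fun n : ℕ => (lam n * n / 2) ^ (-1 / alpha)) =o[atTop]
      (fun n : ℕ => (n : ℝ))) :
    ∃ c : ℝ, 0 < c ∧ ∀ᶠ n : ℕ in atTop,
      ENNReal.ofReal ((2 : ℝ) ^ (c * n)) ≤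
        cliqueET n (lam n) alpha ⌈(lam n * n / 2) ^ (-1 / alpha)⌉₊ := by
  refine ⟨1 / 4, by norm_num, ?_⟩
  have hε₁ : 0 < (1 / 16 : ℝ) ^ (1 / alpha) / (6 * Real.exp 1) := by positivity
  have hε₂ : 0 < Real.log 2 / (4 * alpha) := by positivity
  filter_upwards [hlittle.bound hε₁, hlittle.bound hε₂, eventually_ge_atTop 5,
    eventually_mul_le_two_rpow_half] with n hsmall hlog hn hgrowth
  have hbase : 0 < lam n * n / 2 := by have := hpos n; positivity
  set x := (lam n * n / 2) ^ (-1 / alpha)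
  have hx : 0 < x := by positivity
  have hlx : lam n * x ^ alpha * n = 2 := by
    rw [← Real.rpow_mul hbase.le, div_mul_cancel₀ _ ha.ne', Real.rpow_neg_one]
    field_simp [(hpos n).ne']
  rw [Real.norm_of_nonneg hx.le, Real.norm_natCast] at hsmall hlog
  exact two_rpow_le_cliqueET ha (hpos n).le hx hlx.ge hn (Nat.ceil_pos.2 hx).ne' hsmall hlog
    hgrowth
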